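/- arXiv:math/0605529 — 6 statements merged into one kernel-verified Lean document; each statement's English description precedes it below -/
import Mathlib

section
/- Let R be a principal ideal domain with field of fractions Q, let g be a natural number, and let H be a free R-module of rank 2g. Let K be a Q-linear subspace of Q ⊗_R H with dim_Q K ≥ g. Then there exists an R-basis x_1, …, x_{2g} of H such that for every index i with g < i ≤ 2g, the canonical image of x_i in Q ⊗_R H (i.e. 1 ⊗ x_i) belongs to K. -/
/-!
Let `N ⊆ H` be the preimage of `K` under `x ↦ 1 ⊗ x`. Since `K` is a `Q`-subspace, `N` is
saturated (`H ⧸ N` is torsion free), and `K` is the localization of `N`, so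
`rank N = dim K ≥ g`. Over a PID the finitely generated torsion-free module `H ⧸ N` is free,
so `N` is a direct summand of `H`; a basis of `N` followed by lifts of a basis of `H ⧸ N`
is a basis of `H` whose vectors from `N` can be put in the last `rank N ≥ g` positions.
-/

open Module nonZeroDivisors
open scoped TensorProduct

theorem Submodule.finrank_comap_restrictScalars_eq {R Q M M' : Type*} [CommRing R] [CommRing Q]
    [Algebra R Q] [IsFractionRing R Q] [AddCommGroup M] [Module R M] [AddCommGroup M']
    [Module R M'] [Module Q M'] [IsScalarTower R Q M'] (f : M →ₗ[R] M') [IsLocalizedModule R⁰ f]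
    (K : Submodule Q M') :
    finrank R ((K.restrictScalars R).comap f) = finrank Q K := by
  set N := (K.restrictScalars R).comap f
  have hK : N.localized' Q R⁰ f = K := (Submodule.localized'gi Q R⁰ f).l_u_eq K
  calc finrank R N = finrank R (N.localized' Q R⁰ f) :=
        (IsLocalizedModule.finrank_eq R⁰ (N.toLocalized' Q R⁰ f) le_rfl).symm
    _ = finrank Q (N.localized' Q R⁰ f) := (IsLocalization.finrank_eq Q R⁰ le_rfl).symm
    _ = finrank Q K := by rw [hK]

theorem Submodule.isTorsionFree_quotient_comap_restrictScalars {R Q M M' : Type*} [CommRing R]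
    [IsDomain R] [Field Q] [Algebra R Q] [FaithfulSMul R Q] [AddCommGroup M] [Module R M]
    [AddCommGroup M'] [Module R M'] [Module Q M'] [IsScalarTower R Q M'] (f : M →ₗ[R] M')
    (K : Submodule Q M') :
    IsTorsionFree R (M ⧸ (K.restrictScalars R).comap f) := by
  rw [isTorsionFree_iff_smul_eq_zero]
  intro r x hrx
  induction x using Submodule.Quotient.induction_on with | _ y => ?_
  rw [or_iff_not_imp_left]
  intro hr
  have hr' : algebraMap R Q r ≠ 0 :=
    (map_ne_zero_iff _ (FaithfulSMul.algebraMap_injective R Q)).2 hr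
  rw [← Submodule.Quotient.mk_smul] at hrx
  rw [Submodule.Quotient.mk_eq_zero] at hrx ⊢
  have : (algebraMap R Q r) • f y ∈ K := by simpa [algebraMap_smul] using hrx
  show f y ∈ K
  simpa only [inv_smul_smul₀ hr'] using K.smul_mem (algebraMap R Q r)⁻¹ this

theorem Submodule.exists_basis_sum_of_projective_quotient {R M ι κ : Type*} [Ring R]
    [AddCommGroup M] [Module R M] (N : Submodule R M) [Projective R (M ⧸ N)]
    (bN : Basis ι R N) (bQ : Basis κ R (M ⧸ N)) :
    ∃ b : Basis (ι ⊕ κ) R M, ∀ i, b (Sum.inl i) = bN i := by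
  obtain ⟨l, hl⟩ := projective_lifting_property N.mkQ LinearMap.id N.mkQ_surjective
  let e := (LinearMap.exact_subtype_mkQ N).splitSurjectiveEquiv N.injective_subtype ⟨l, hl⟩
  refine ⟨(bN.prod bQ).map e.1.symm, fun i => ?_⟩
  simpa using (LinearMap.congr_fun e.2.1 (bN i)).symm

theorem Submodule.exists_basis_fin_mem_of_isTorsionFree_quotient {R M : Type*} [CommRing R]
    [IsDomain R] [IsPrincipalIdealRing R] [AddCommGroup M] [Module R M] [Module.Free R M]
    [Module.Finite R M] (N : Submodule R M) [IsTorsionFree R (M ⧸ N)] :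
    ∃ b : Basis (Fin (finrank R M)) R M,
      ∀ i : Fin (finrank R M), finrank R M - finrank R N ≤ i → b i ∈ N := by
  obtain ⟨b, hb⟩ :=
    N.exists_basis_sum_of_projective_quotient (finBasis R N) (finBasis R (M ⧸ N))
  have hrank : finrank R (M ⧸ N) + finrank R N = finrank R M := N.finrank_quotient_add_finrank
  refine ⟨b.reindex ((Equiv.sumComm _ _).trans (finSumFinEquiv.trans (finCongr hrank))),
    fun i hi => ?_⟩
  obtain ⟨j, hj⟩ : ∃ j, Fin.natAdd (finrank R (M ⧸ N)) j = finCongr hrank.symm i :=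
    ⟨⟨i - finrank R (M ⧸ N), by omega⟩,
      Fin.ext (by simp only [Fin.val_natAdd, finCongr_apply, Fin.val_cast]; omega)⟩
  simp [Basis.reindex_apply, ← hj, finSumFinEquiv_symm_apply_natAdd, hb]

/-- Claim 2 in the proof of the concordance lemma: over a PID `R` with fraction
field `Q`, if `H` is a free `R`-module of rank `2g` and `K` is a `Q`-subspace of
`Q ⊗[R] H` of dimension at least `g`, then there is an `R`-basis `x₁, …, x_{2g}`
of `H` whose last `g` vectors map into `K` under `x ↦ 1 ⊗ x`. -/
theorem stmt0 (R : Type*) [CommRing R] [IsDomain R] [IsPrincipalIdealRing R]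
    (Q : Type*) [Field Q] [Algebra R Q] [IsFractionRing R Q]
    (g : ℕ) (H : Type*) [AddCommGroup H] [Module R H]
    [Module.Free R H] [Module.Finite R H]
    (hrank : Module.finrank R H = 2 * g)
    (K : Submodule Q (Q ⊗[R] H))
    (hK : g ≤ Module.finrank Q K) :
    ∃ x : Module.Basis (Fin (2 * g)) R H,
      ∀ i : Fin (2 * g), g ≤ (i : ℕ) → ((1 : Q) ⊗ₜ[R] (x i)) ∈ K := by
  let N := (K.restrictScalars R).comap (TensorProduct.mk R Q H 1)
  have : IsTorsionFree R (H ⧸ N) := Submodule.isTorsionFree_quotient_comap_restrictScalars _ K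
  have hN : finrank R N = finrank Q K := Submodule.finrank_comap_restrictScalars_eq _ K
  obtain ⟨b, hb⟩ := N.exists_basis_fin_mem_of_isTorsionFree_quotient
  refine ⟨b.reindex (finCongr hrank), fun i hi => ?_⟩
  rw [Basis.reindex_apply]
  exact hb _ (by simp only [finCongr_symm, finCongr_apply, Fin.val_cast]; omega)
end

section
/- Let S be a commutative ring, n a natural number, Γ an n×n matrix over S, u a column vector in S^n, w a row vector in S^n, a ∈ S, and let c, c' ∈ S be units. Let Γ' be the (n+2)×(n+2) matrix whose upper-left n×n block is Γ, whose entries in the last two columns of the first n rows are u (column n+1) and 0 (column n+2), whose row n+1 is (w, a, c), and whose row n+2 is (0, …, 0, c', 0). Then the S-module presented by Γ' is isomorphic to the S-module presented by Γ, where the module presented by an m×m matrix A over S is the quotient of the free module S^m by the submodule generated by the rows of A. -/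
/-- The algebraic core of Proposition 3.1: the module presented by the
`(n+2)×(n+2)` matrix obtained from `Γ` by the displayed elementary enlargement
(with unit corner entries `c`, `c'`) is isomorphic to the module presented by
`Γ`, where the module presented by a square matrix `A` is the quotient of the
free module by the submodule generated by the rows of `A`. -/
theorem stmt1 (S : Type*) [CommRing S] (n : ℕ)
    (Γ : Matrix (Fin n) (Fin n) S) (u : Fin n → S) (w : Fin n → S)
    (a c c' : S) (hc : IsUnit c) (hc' : IsUnit c')
    (Γ' : Matrix (Fin n ⊕ Fin 2) (Fin n ⊕ Fin 2) S)
    (hΓ' : Γ' = Matrix.fromBlocks Γ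
      (Matrix.of fun i j => if j = 0 then u i else 0)
      (Matrix.of fun i j => if i = 0 then w j else 0)
      !![a, c; c', 0]) :
    Nonempty
      (((Fin n ⊕ Fin 2 → S) ⧸ Submodule.span S (Set.range fun i => Γ' i)) ≃ₗ[S]
        ((Fin n → S) ⧸ Submodule.span S (Set.range fun i => Γ i))) := by
  classical
  obtain ⟨c0, hcc0, -⟩ := isUnit_iff_exists.mp hc
  obtain ⟨c'0, -, hcc'0⟩ := isUnit_iff_exists.mp hc'
  -- entries of Γ'
  have hA : ∀ i j, Γ' (Sum.inl i) (Sum.inl j) = Γ i j := by simp [hΓ']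
  have hB1 : ∀ i, Γ' (Sum.inl i) (Sum.inr 1) = 0 := by simp [hΓ']
  have hB0 : ∀ i, Γ' (Sum.inl i) (Sum.inr 0) = u i := by simp [hΓ']
  have hC0 : ∀ j, Γ' (Sum.inr 0) (Sum.inl j) = w j := by simp [hΓ']
  have hC1 : ∀ j, Γ' (Sum.inr 1) (Sum.inl j) = 0 := by simp [hΓ']
  have hD00 : Γ' (Sum.inr 0) (Sum.inr 0) = a := by simp [hΓ']
  have hD01 : Γ' (Sum.inr 0) (Sum.inr 1) = c := by simp [hΓ']
  have hD10 : Γ' (Sum.inr 1) (Sum.inr 0) = c' := by simp [hΓ']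
  have hD11 : Γ' (Sum.inr 1) (Sum.inr 1) = 0 := by simp [hΓ']
  set N : Submodule S (Fin n ⊕ Fin 2 → S) :=
    Submodule.span S (Set.range fun i => Γ' i) with hN
  set P : Submodule S (Fin n → S) :=
    Submodule.span S (Set.range fun i => Γ i) with hP
  -- the map S^{n+2} → S^n
  set p : (Fin n ⊕ Fin 2 → S) →ₗ[S] (Fin n → S) :=
    { toFun := fun z j => z (Sum.inl j) - z (Sum.inr 1) * (c0 * w j)
      map_add' := by intro x y; funext j; simp [Pi.add_apply]; ring
      map_smul' := by intro r x; funext j; simp [Pi.smul_apply, smul_eq_mul]; ring }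
    with hp
  -- the map S^n → S^{n+2}
  set g0 : (Fin n → S) →ₗ[S] (Fin n ⊕ Fin 2 → S) :=
    { toFun := fun x => Sum.elim x 0
      map_add' := by intro x y; funext k; cases k <;> simp
      map_smul' := by intro r x; funext k; cases k <;> simp }
    with hg0
  have hNker : N ≤ LinearMap.ker (P.mkQ ∘ₗ p) := by
    rw [hN, Submodule.span_le]
    rintro _ ⟨i, rfl⟩
    simp only [SetLike.mem_coe, LinearMap.mem_ker, LinearMap.comp_apply,
      Submodule.mkQ_apply, Submodule.Quotient.mk_eq_zero]
    cases i with
    | inl i =>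
        have : p (Γ' (Sum.inl i)) = Γ i := by
          funext j
          simp [hp, hA, hB1]
        rw [this]
        exact Submodule.subset_span ⟨i, rfl⟩
    | inr b =>
        fin_cases b
        · show p (Γ' (Sum.inr 0)) ∈ P
          have : p (Γ' (Sum.inr 0)) = 0 := by
            funext j
            simp only [hp, LinearMap.coe_mk, AddHom.coe_mk, hC0, hD01, Pi.zero_apply]
            linear_combination (-(w j)) * hcc0
          rw [this]; exact P.zero_mem
        · show p (Γ' (Sum.inr 1)) ∈ P
          have : p (Γ' (Sum.inr 1)) = 0 := by
            funext j
            simp [hp, hC1, hD11]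
          rw [this]; exact P.zero_mem
  have hPker : P ≤ LinearMap.ker (N.mkQ ∘ₗ g0) := by
    rw [hP, Submodule.span_le]
    rintro _ ⟨i, rfl⟩
    simp only [SetLike.mem_coe, LinearMap.mem_ker, LinearMap.comp_apply,
      Submodule.mkQ_apply, Submodule.Quotient.mk_eq_zero]
    have : g0 (Γ i) = Γ' (Sum.inl i) - (u i * c'0) • Γ' (Sum.inr 1) := by
      funext k
      cases k with
      | inl j => simp [hg0, hA, hC1]
      | inr b =>
          fin_cases b
          · show Sum.elim (Γ i) 0 (Sum.inr 0)
              = (Γ' (Sum.inl i) - (u i * c'0) • Γ' (Sum.inr 1)) (Sum.inr 0)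
            simp only [Sum.elim_inr, Pi.zero_apply, Pi.sub_apply, Pi.smul_apply,
              smul_eq_mul, hB0, hD10]
            linear_combination (u i) * hcc'0
          · show Sum.elim (Γ i) 0 (Sum.inr 1)
              = (Γ' (Sum.inl i) - (u i * c'0) • Γ' (Sum.inr 1)) (Sum.inr 1)
            simp [hB1, hD11]
    rw [this]
    exact N.sub_mem (Submodule.subset_span ⟨Sum.inl i, rfl⟩)
      (N.smul_mem _ (Submodule.subset_span ⟨Sum.inr 1, rfl⟩))
  refine ⟨LinearEquiv.ofLinear (Submodule.liftQ N (P.mkQ ∘ₗ p) hNker)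
    (Submodule.liftQ P (N.mkQ ∘ₗ g0) hPker) ?_ ?_⟩
  · apply Submodule.linearMap_qext
    apply LinearMap.ext
    intro x
    have : p (g0 x) = x := by
      funext j; simp [hp, hg0]
    simp [this]
  · apply Submodule.linearMap_qext
    apply LinearMap.ext
    intro z
    simp only [LinearMap.comp_apply, Submodule.mkQ_apply, Submodule.liftQ_apply,
      LinearMap.id_apply]
    rw [Submodule.Quotient.eq]
    have hmem : g0 (p z) - z
        = (-(z (Sum.inr 1) * c0)) • Γ' (Sum.inr 0)
          + ((-(z (Sum.inr 0)) - (-(z (Sum.inr 1) * c0)) * a) * c'0) • Γ' (Sum.inr 1) := by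
      funext k
      cases k with
      | inl j =>
          simp only [hg0, hp, LinearMap.coe_mk, AddHom.coe_mk, Sum.elim_inl,
            Pi.sub_apply, Pi.add_apply, Pi.smul_apply, smul_eq_mul, hC0, hC1]
          ring
      | inr b =>
          fin_cases b
          · show (g0 (p z) - z) (Sum.inr 0)
              = ((-(z (Sum.inr 1) * c0)) • Γ' (Sum.inr 0)
                + ((-(z (Sum.inr 0)) - (-(z (Sum.inr 1) * c0)) * a) * c'0)
                  • Γ' (Sum.inr 1)) (Sum.inr 0)
            simp only [hg0, LinearMap.coe_mk, AddHom.coe_mk, Sum.elim_inr,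
              Pi.zero_apply, Pi.sub_apply, Pi.add_apply, Pi.smul_apply,
              smul_eq_mul, hD00, hD10]
            linear_combination (z (Sum.inr 0) + (-(z (Sum.inr 1) * c0)) * a) * hcc'0
          · show (g0 (p z) - z) (Sum.inr 1)
              = ((-(z (Sum.inr 1) * c0)) • Γ' (Sum.inr 0)
                + ((-(z (Sum.inr 0)) - (-(z (Sum.inr 1) * c0)) * a) * c'0)
                  • Γ' (Sum.inr 1)) (Sum.inr 1)
            simp only [hg0, LinearMap.coe_mk, AddHom.coe_mk, Sum.elim_inr,
              Pi.zero_apply, Pi.sub_apply, Pi.add_apply, Pi.smul_apply,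
              smul_eq_mul, hD01, hD11]
            linear_combination (z (Sum.inr 1)) * hcc0
    rw [hmem]
    exact N.add_mem (N.smul_mem _ (Submodule.subset_span ⟨Sum.inr 0, rfl⟩))
      (N.smul_mem _ (Submodule.subset_span ⟨Sum.inr 1, rfl⟩))
end

section
/- Let R be a commutative ring, t ∈ R, n a natural number, and let Θ, Ψ be n×n matrices over R. Let Ψ' be the (n+2)×(n+2) matrix with upper-left block Ψ, with arbitrary entries in positions (i, n+1) and (n+1, j) for i, j ≤ n+1, and with all entries in row n+2 and column n+2 equal to 0. Let Θ' be an (n+2)×(n+2) matrix with upper-left block Θ, arbitrary entries in positions (i, n+1) and (n+1, j) for i, j ≤ n+1, all other entries of row n+2 and column n+2 equal to 0, except that either the entry (n+2, n+1) equals 1 and the entry (n+1, n+2) equals 0, or the entry (n+1, n+2) equals 1 and the entry (n+2, n+1) equals 0. Then det(t·Θ' − (Θ')^T + Ψ') = t · det(t·Θ − Θ^T + Ψ). -/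
open Matrix

section Aux

variable {R : Type*} [CommRing R] {n : ℕ}

/-- Determinant of the "normalized" enlarged block matrix with corner `!![d,1;1,0]`. -/
lemma aux_detN (M : Matrix (Fin n) (Fin n) R) (b c : Fin n → R) (d : R) :
    (Matrix.fromBlocks M
      (Matrix.of fun i (j : Fin 2) => if j = 0 then b i else 0)
      (Matrix.of fun (i : Fin 2) j => if i = 0 then c j else 0)
      (!![d, 1; 1, 0] : Matrix (Fin 2) (Fin 2) R)).det = - M.det := by
  have hinv : Invertible (!![d, 1; 1, 0] : Matrix (Fin 2) (Fin 2) R) := by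
    refine ⟨!![0, 1; 1, -d], ?_, ?_⟩ <;>
      · ext i j
        fin_cases i <;> fin_cases j <;>
          simp [Matrix.mul_apply, Fin.sum_univ_two]
  have hInvOf : ⅟(!![d, 1; 1, 0] : Matrix (Fin 2) (Fin 2) R) = !![0, 1; 1, -d] := by
    apply invOf_eq_right_inv
    ext i j
    fin_cases i <;> fin_cases j <;>
      simp [Matrix.mul_apply, Fin.sum_univ_two]
  rw [Matrix.det_fromBlocks₂₂, hInvOf]
  have h0 : (Matrix.of fun i (j : Fin 2) => if j = 0 then b i else 0) *
      (!![0, 1; 1, -d] : Matrix (Fin 2) (Fin 2) R) *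
      (Matrix.of fun (i : Fin 2) j => if i = 0 then c j else 0) = 0 := by
    ext i j
    simp [Matrix.mul_apply, Fin.sum_univ_two]
  rw [h0, sub_zero]
  have : (!![d, 1; 1, 0] : Matrix (Fin 2) (Fin 2) R).det = -1 := by
    simp [Matrix.det_fin_two_of]
  rw [this]
  ring

/-- Determinant of the enlarged block matrix with corner `!![d,r;s,0]`, `s * r = -t`. -/
lemma aux_det (t : R) (M : Matrix (Fin n) (Fin n) R) (b c : Fin n → R) (d s r : R)
    (hsr : s * r = -t) :
    (Matrix.fromBlocks M
      (Matrix.of fun i (j : Fin 2) => if j = 0 then b i else 0)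
      (Matrix.of fun (i : Fin 2) j => if i = 0 then c j else 0)
      (!![d, r; s, 0] : Matrix (Fin 2) (Fin 2) R)).det = t * M.det := by
  have key : (Matrix.fromBlocks M
      (Matrix.of fun i (j : Fin 2) => if j = 0 then b i else 0)
      (Matrix.of fun (i : Fin 2) j => if i = 0 then c j else 0)
      (!![d, r; s, 0] : Matrix (Fin 2) (Fin 2) R)) =
      (Matrix.fromBlocks 1 0 0 (!![1, 0; 0, s] : Matrix (Fin 2) (Fin 2) R)) *
      (Matrix.fromBlocks M
        (Matrix.of fun i (j : Fin 2) => if j = 0 then b i else 0)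
        (Matrix.of fun (i : Fin 2) j => if i = 0 then c j else 0)
        (!![d, 1; 1, 0] : Matrix (Fin 2) (Fin 2) R)) *
      (Matrix.fromBlocks 1 0 0 (!![1, 0; 0, r] : Matrix (Fin 2) (Fin 2) R)) := by
    have hB : (Matrix.of fun i (j : Fin 2) => if j = 0 then b i else 0) *
        (!![1, 0; 0, r] : Matrix (Fin 2) (Fin 2) R) =
        (Matrix.of fun i (j : Fin 2) => if j = 0 then b i else 0) := by
      ext i j
      fin_cases j <;> simp [Matrix.mul_apply, Fin.sum_univ_two]
    have hC : (!![1, 0; 0, s] : Matrix (Fin 2) (Fin 2) R) *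
        (Matrix.of fun (i : Fin 2) j => if i = 0 then c j else 0) =
        (Matrix.of fun (i : Fin 2) j => if i = 0 then c j else 0) := by
      ext i j
      fin_cases i <;> simp [Matrix.mul_apply, Fin.sum_univ_two]
    have hD : (!![1, 0; 0, s] : Matrix (Fin 2) (Fin 2) R) *
        (!![d, 1; 1, 0] : Matrix (Fin 2) (Fin 2) R) *
        (!![1, 0; 0, r] : Matrix (Fin 2) (Fin 2) R) =
        (!![d, r; s, 0] : Matrix (Fin 2) (Fin 2) R) := by
      ext i j
      fin_cases i <;> fin_cases j <;>
        simp [Matrix.mul_apply, Fin.sum_univ_two]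
    rw [Matrix.fromBlocks_multiply, Matrix.fromBlocks_multiply]
    simp only [Matrix.one_mul, Matrix.mul_one, Matrix.zero_mul, Matrix.mul_zero,
      add_zero, zero_add]
    rw [hB, hC, hD]
  rw [key, Matrix.det_mul, Matrix.det_mul, aux_detN,
    Matrix.det_fromBlocks_zero₂₁, Matrix.det_fromBlocks_zero₂₁, Matrix.det_one]
  have h1 : (!![1, 0; 0, s] : Matrix (Fin 2) (Fin 2) R).det = s := by
    simp [Matrix.det_fin_two_of]
  have h2 : (!![1, 0; 0, r] : Matrix (Fin 2) (Fin 2) R).det = r := by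
    simp [Matrix.det_fin_two_of]
  rw [h1, h2]
  linear_combination (-M.det) * hsr
end Aux

/-- Invariance of `det(tΘ' − Θ'ᵀ + Ψ')` under an elementary enlargement of a
Seifert triple: the enlarged determinant equals `t` times the original one.
Here `Θ'` and `Ψ'` are the `(n+2)×(n+2)` matrices described in Section 3.2 of
the paper, with arbitrary entries `p, q, x, y, α, β` in row/column `n+1`,
vanishing row/column `n+2` except for the corner entries `(e₁₂, e₂₁)` of `Θ'`
which are `(0,1)` or `(1,0)`. -/
theorem stmt3 (R : Type*) [CommRing R] (t : R) (n : ℕ)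
    (Θ Ψ : Matrix (Fin n) (Fin n) R)
    (p x : Fin n → R) (q y : Fin n → R) (α β e₁₂ e₂₁ : R)
    (he : (e₁₂ = 0 ∧ e₂₁ = 1) ∨ (e₁₂ = 1 ∧ e₂₁ = 0))
    (Θ' Ψ' : Matrix (Fin n ⊕ Fin 2) (Fin n ⊕ Fin 2) R)
    (hΘ' : Θ' = Matrix.fromBlocks Θ
      (Matrix.of fun i j => if j = 0 then p i else 0)
      (Matrix.of fun i j => if i = 0 then q j else 0)
      !![α, e₁₂; e₂₁, 0])
    (hΨ' : Ψ' = Matrix.fromBlocks Ψ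
      (Matrix.of fun i j => if j = 0 then x i else 0)
      (Matrix.of fun i j => if i = 0 then y j else 0)
      !![β, 0; 0, 0]) :
    (t • Θ' - Θ'ᵀ + Ψ').det = t * (t • Θ - Θᵀ + Ψ).det := by
  subst hΘ' hΨ'
  have hM : (t • Matrix.fromBlocks Θ
      (Matrix.of fun i j => if j = 0 then p i else 0)
      (Matrix.of fun i j => if i = 0 then q j else 0)
      !![α, e₁₂; e₂₁, 0] -
      (Matrix.fromBlocks Θ
      (Matrix.of fun i j => if j = 0 then p i else 0)
      (Matrix.of fun i j => if i = 0 then q j else 0)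
      !![α, e₁₂; e₂₁, 0])ᵀ +
      Matrix.fromBlocks Ψ
      (Matrix.of fun i j => if j = 0 then x i else 0)
      (Matrix.of fun i j => if i = 0 then y j else 0)
      !![β, 0; 0, 0]) =
      Matrix.fromBlocks (t • Θ - Θᵀ + Ψ)
        (Matrix.of fun i (j : Fin 2) => if j = 0 then t * p i - q i + x i else 0)
        (Matrix.of fun (i : Fin 2) j => if i = 0 then t * q j - p j + y j else 0)
        (!![t * α - α + β, t * e₁₂ - e₂₁; t * e₂₁ - e₁₂, 0] :
          Matrix (Fin 2) (Fin 2) R) := by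
    ext i j
    rcases i with i | i <;> rcases j with j | j
    · simp [Matrix.fromBlocks, Matrix.mul_apply]
    · fin_cases j <;> simp [Matrix.fromBlocks]
    · fin_cases i <;> simp [Matrix.fromBlocks]
    · fin_cases i <;> fin_cases j <;> simp [Matrix.fromBlocks]
  rw [hM]
  rcases he with ⟨h1, h2⟩ | ⟨h1, h2⟩ <;> subst h1 <;> subst h2
  · have := aux_det t (t • Θ - Θᵀ + Ψ)
      (fun i => t * p i - q i + x i) (fun j => t * q j - p j + y j)
      (t * α - α + β) t (-1) (by ring)
    simpa using this
  · have := aux_det t (t • Θ - Θᵀ + Ψ)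
      (fun i => t * p i - q i + x i) (fun j => t * q j - p j + y j)
      (t * α - α + β) (-1) t (by ring)
    simpa using this
end

section
/- Let R be a commutative ring, t ∈ R, n a natural number, Θ₀ and Ψ₀ n×n matrices over R, v and x column vectors in R^n, w and y row vectors in R^n, and α, β ∈ R. Let Θ₊ be the (n+1)×(n+1) block matrix with blocks Θ₀, v, w, α; let Θ₋ be the same matrix with the corner entry α replaced by α+1; and let Ψ be the (n+1)×(n+1) block matrix with blocks Ψ₀, x, y, β. Then det(t·Θ₊ − Θ₊^T + Ψ) − det(t·Θ₋ − Θ₋^T + Ψ) = (1 − t) · det(t·Θ₀ − Θ₀^T + Ψ₀). -/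
/-!
The corner entries of `t • Θ₊ - Θ₊ᵀ + Ψ` and `t • Θ₋ - Θ₋ᵀ + Ψ` differ by `t - 1`, while all other
entries agree. Expanding along the last row, the determinant is affine in the corner entry with
slope the complementary minor `det (t • Θ₀ - Θ₀ᵀ + Ψ₀)`.
-/

open Matrix

theorem Matrix.smul_sub_transpose_add_fromBlocks {R l m : Type*} [CommRing R] (t : R)
    (A A' : Matrix l l R) (B B' : Matrix l m R) (C C' : Matrix m l R) (D D' : Matrix m m R) :
    t • fromBlocks A B C D - (fromBlocks A B C D)ᵀ + fromBlocks A' B' C' D'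
      = fromBlocks (t • A - Aᵀ + A') (t • B - Cᵀ + B') (t • C - Bᵀ + C')
          (t • D - Dᵀ + D') := by
  simp only [fromBlocks_transpose, fromBlocks_smul, sub_eq_add_neg, fromBlocks_neg,
    fromBlocks_add]

theorem Matrix.det_fromBlocks_add_corner {R m : Type*} [CommRing R] [Fintype m] [DecidableEq m]
    (A : Matrix m m R) (B : Matrix m (Fin 1) R) (C : Matrix (Fin 1) m R) (d c : R) :
    (fromBlocks A B C !![d + c]).det = (fromBlocks A B C !![d]).det + c * A.det := by
  set M := fromBlocks A B C !![d]
  have hrow : fromBlocks A B C !![d + c]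
      = M.updateRow (Sum.inr 0) (M (Sum.inr 0) + Pi.single (Sum.inr 0) c) := by
    ext (i | i) (j | j) <;> simp [M, updateRow_apply, Fin.fin_one_eq_zero]
  have hcorner : M.updateRow (Sum.inr 0) (Pi.single (Sum.inr 0) c) = fromBlocks A B 0 !![c] := by
    ext (i | i) (j | j) <;> simp [M, updateRow_apply, Fin.fin_one_eq_zero]
  rw [hrow, det_updateRow_add, updateRow_eq_self, hcorner, det_fromBlocks_zero₂₁]
  simp [mul_comm]

/-- The matrix computation proving the skein relation (Proposition 3.2): the
bordered Seifert matrices `Θ₊` and `Θ₋` differ only in the corner diagonal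
entry (by `1`), and the corresponding determinants differ by
`(1 − t)·det(tΘ₀ − Θ₀ᵀ + Ψ₀)`. -/
theorem stmt4 (R : Type*) [CommRing R] (t : R) (n : ℕ)
    (Θ₀ Ψ₀ : Matrix (Fin n) (Fin n) R)
    (v x : Fin n → R) (w y : Fin n → R) (α β : R)
    (Θp Θm Ψ : Matrix (Fin n ⊕ Fin 1) (Fin n ⊕ Fin 1) R)
    (hΘp : Θp = Matrix.fromBlocks Θ₀
      (Matrix.of fun i _ => v i) (Matrix.of fun _ j => w j) !![α])
    (hΘm : Θm = Matrix.fromBlocks Θ₀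
      (Matrix.of fun i _ => v i) (Matrix.of fun _ j => w j) !![α + 1])
    (hΨ : Ψ = Matrix.fromBlocks Ψ₀
      (Matrix.of fun i _ => x i) (Matrix.of fun _ j => y j) !![β]) :
    (t • Θp - Θpᵀ + Ψ).det - (t • Θm - Θmᵀ + Ψ).det
      = (1 - t) * (t • Θ₀ - Θ₀ᵀ + Ψ₀).det := by
  subst hΘp hΘm hΨ
  have hcorner_p : t • !![α] - !![α]ᵀ + !![β] = !![t * α - α + β] := by
    ext i j; fin_cases i; fin_cases j; simp
  have hcorner_m : t • !![α + 1] - !![α + 1]ᵀ + !![β] = !![(t * α - α + β) + (t - 1)] := by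
    ext i j; fin_cases i; fin_cases j; simp; ring
  rw [smul_sub_transpose_add_fromBlocks, smul_sub_transpose_add_fromBlocks, hcorner_p, hcorner_m,
    det_fromBlocks_add_corner _ _ _ (t * α - α + β) (t - 1)]
  ring
end

section
/- Let F be a field, N a natural number, and A, B N×N matrices over F. Consider the polynomial P(s) = det(A' + s·B') ∈ F[s], where A' and B' are A and B viewed as matrices over F[s] (entrywise via the constant-coefficient embedding) and s is the polynomial variable. Then the degree of P is at most the rank of the matrix B. -/
/-!
Multiplying by invertible constant matrices `V`, `U` with `V * B * U` in rank normal form changes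
`det (A + s • B)` only by a nonzero constant factor. Afterwards `s` occurs in just `rank B`
columns, each time linearly, so every term of the Leibniz expansion has degree at most `rank B`.
-/

open Polynomial Matrix

namespace Matrix

variable {n R : Type*} [Fintype n] [DecidableEq n] [CommRing R]

theorem natDegree_det_le_sum_of_natDegree_le (M : Matrix n n R[X]) (d : n → ℕ)
    (h : ∀ i j, (M i j).natDegree ≤ d j) : M.det.natDegree ≤ ∑ j, d j := by
  rw [det_apply']
  refine natDegree_sum_le_of_forall_le _ _ fun σ _ => natDegree_mul_le.trans ?_
  rw [natDegree_intCast, zero_add]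
  exact (natDegree_prod_le _ _).trans (Finset.sum_le_sum fun j _ => h (σ j) j)

theorem natDegree_det_map_C_add_X_smul_le (A B : Matrix n n R) (s : Finset n)
    (hB : ∀ i, ∀ j ∉ s, B i j = 0) :
    (A.map C + (X : R[X]) • B.map C).det.natDegree ≤ s.card := by
  calc _ ≤ ∑ j, if j ∈ s then 1 else 0 := by
        refine natDegree_det_le_sum_of_natDegree_le _ _ fun i j => ?_
        split_ifs with hj
        · simp only [add_apply, map_apply, smul_apply, smul_eq_mul]
          exact (natDegree_add_le _ _).trans
            (by simpa using (natDegree_C_mul_le (B i j) X).trans natDegree_X_le)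
        · simp [hB i j hj]
    _ = s.card := by simp

end Matrix

/-- The degree in `s` of `det(A + s·B)`, viewed as a polynomial in `s` with the
entries of the matrices `A`, `B` over a field as constants, is at most the rank
of the matrix `B` (Section 3.3 of the paper). -/
theorem stmt6 (F : Type*) [Field F] (N : ℕ)
    (A B : Matrix (Fin N) (Fin N) F) :
    ((Matrix.of fun i j =>
        Polynomial.C (A i j) + Polynomial.X * Polynomial.C (B i j) :
        Matrix (Fin N) (Fin N) (Polynomial F)).det).natDegree ≤ B.rank := by
  obtain ⟨V, U, e, hV, hU, hVBU⟩ := B.exists_rank_normal_form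
  set M : Matrix (Fin N) (Fin N) F[X] := of fun i j => C (A i j) + X * C (B i j)
  have hM : V.map C * M * U.map C = (V * A * U).map C + (X : F[X]) • (V * B * U).map C := by
    have : M = A.map C + (X : F[X]) • B.map C := by ext; simp [M]
    simp only [this, Matrix.map_mul, mul_add, add_mul, Matrix.mul_smul, Matrix.smul_mul]
  have hdet : (V.map C * M * U.map C).det = C (V.det * U.det) * M.det := by
    rw [det_mul, det_mul, C_mul, RingHom.map_det, RingHom.map_det]
    simp only [RingHom.mapMatrix_apply]
    ring
  have hVU : V.det * U.det ≠ 0 :=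
    mul_ne_zero ((isUnit_iff_isUnit_det V).1 hV).ne_zero ((isUnit_iff_isUnit_det U).1 hU).ne_zero
  let s : Finset (Fin N) := Finset.univ.map (Function.Embedding.inl.trans e.symm.toEmbedding)
  have hs : ∀ i, ∀ j ∉ s, (V * B * U) i j = 0 := by
    intro i j hj
    rw [hVBU, submatrix_apply]
    cases hej : e j with
    | inl k => exact absurd (Finset.mem_map.2 ⟨k, Finset.mem_univ _, by simp [← hej]⟩) hj
    | inr k => cases e i <;> rfl
  calc M.det.natDegree = (V.map C * M * U.map C).det.natDegree := by
        rw [hdet, natDegree_C_mul hVU]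
    _ ≤ s.card := hM ▸ natDegree_det_map_C_add_X_smul_le _ _ s hs
    _ = B.rank := by simp [s]
end

section
/- Let S be a commutative ring, g and n natural numbers, p ≤ n, and let t ∈ S be a unit and s₁, …, s_n ∈ S. Let D, A, B, E₁, …, E_n, C₁, …, C_n be g×g matrices over S, and set C'_u = C_u^T for u ≤ p and C'_u = −C_u^T for u > p. Let Θ be the 2g×2g block matrix with blocks D, A, B, 0, and for each u let Ψ_u be the 2g×2g block matrix with blocks E_u, C_u, C'_u, 0. Then det(t·Θ − Θ^T + Σ_{u=1}^n s_u·Ψ_u) = t^g · det(t^{-1}·A − B^T − Σ_{u=1}^p s_u t^{-1}·C_u + Σ_{u=p+1}^n s_u t^{-1}·C_u) · det(t·A − B^T + Σ_{u=1}^n s_u·C_u). -/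
open Matrix


lemma det_J_aux {S : Type*} [CommRing S] {g : ℕ} :
    (Matrix.fromBlocks (0 : Matrix (Fin g) (Fin g) S) (1 : Matrix (Fin g) (Fin g) S)
      (1 : Matrix (Fin g) (Fin g) S) (0 : Matrix (Fin g) (Fin g) S)).det = (-1 : S) ^ g := by
  have h : Matrix.fromBlocks (0 : Matrix (Fin g) (Fin g) S) (1 : Matrix (Fin g) (Fin g) S)
        (1 : Matrix (Fin g) (Fin g) S) (0 : Matrix (Fin g) (Fin g) S)
      = (Matrix.fromBlocks 1 0 0 (-1) : Matrix (Fin g ⊕ Fin g) (Fin g ⊕ Fin g) S) *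
        ((Matrix.fromBlocks 1 1 0 1 : Matrix (Fin g ⊕ Fin g) (Fin g ⊕ Fin g) S) *
         (Matrix.fromBlocks 1 0 (-1) 1 : Matrix (Fin g ⊕ Fin g) (Fin g ⊕ Fin g) S) *
         (Matrix.fromBlocks 1 1 0 1 : Matrix (Fin g ⊕ Fin g) (Fin g ⊕ Fin g) S)) := by
    simp [Matrix.fromBlocks_multiply]
  rw [h, det_mul, det_mul, det_mul, Matrix.det_fromBlocks_zero₂₁, Matrix.det_fromBlocks_zero₂₁]
  simp [Matrix.det_fromBlocks_zero₁₂, Matrix.det_fromBlocks_zero₂₁, Matrix.det_neg]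

lemma det_blocks_zero_aux {S : Type*} [CommRing S] {g : ℕ}
    (P Q R : Matrix (Fin g) (Fin g) S) :
    (Matrix.fromBlocks P Q R 0).det = (-1 : S) ^ g * Q.det * R.det := by
  have h : Matrix.fromBlocks P Q R (0 : Matrix (Fin g) (Fin g) S)
      = Matrix.fromBlocks Q P 0 R *
        Matrix.fromBlocks (0 : Matrix (Fin g) (Fin g) S) (1 : Matrix (Fin g) (Fin g) S)
          (1 : Matrix (Fin g) (Fin g) S) (0 : Matrix (Fin g) (Fin g) S) := by
    simp [Matrix.fromBlocks_multiply]
  rw [h, det_mul, Matrix.det_fromBlocks_zero₂₁, det_J_aux]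
  ring


/-- The algebraic core of Theorem 5.2 (Fox–Milnor type factorization): with
`Θ = fromBlocks D A B 0`, `Ψᵤ = fromBlocks Eᵤ Cᵤ C'ᵤ 0` where `C'ᵤ = Cᵤᵀ` for
`u ≤ p` (symmetric forms) and `C'ᵤ = −Cᵤᵀ` for `u > p` (skew-symmetric forms),
and `t` a unit, one has
`det(tΘ − Θᵀ + Σᵤ sᵤΨᵤ) = t^g · det(t⁻¹A − Bᵀ − Σ_{u≤p} sᵤt⁻¹Cᵤ + Σ_{u>p} sᵤt⁻¹Cᵤ)
  · det(tA − Bᵀ + Σᵤ sᵤCᵤ)`. -/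
theorem stmt8 (S : Type*) [CommRing S] (g n p : ℕ) (hp : p ≤ n)
    (t : Sˣ) (s : Fin n → S)
    (D A B : Matrix (Fin g) (Fin g) S)
    (E C C' : Fin n → Matrix (Fin g) (Fin g) S)
    (hC' : ∀ u : Fin n, C' u = if (u : ℕ) < p then (C u)ᵀ else -(C u)ᵀ)
    (Θ : Matrix (Fin g ⊕ Fin g) (Fin g ⊕ Fin g) S)
    (Ψ : Fin n → Matrix (Fin g ⊕ Fin g) (Fin g ⊕ Fin g) S)
    (hΘ : Θ = Matrix.fromBlocks D A B 0)
    (hΨ : ∀ u : Fin n, Ψ u = Matrix.fromBlocks (E u) (C u) (C' u) 0) :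
    ((t : S) • Θ - Θᵀ + ∑ u, s u • Ψ u).det
      = (t : S) ^ g *
        (((t⁻¹ : Sˣ) : S) • A - Bᵀ
          - ∑ u ∈ Finset.univ.filter (fun u : Fin n => (u : ℕ) < p),
              (s u * ((t⁻¹ : Sˣ) : S)) • C u
          + ∑ u ∈ Finset.univ.filter (fun u : Fin n => ¬ (u : ℕ) < p),
              (s u * ((t⁻¹ : Sˣ) : S)) • C u).det *
        ((t : S) • A - Bᵀ + ∑ u, s u • C u).det := by
  set a : S := ((t⁻¹ : Sˣ) : S) with ha
  have hta : (t : S) * a = 1 := by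
    rw [ha]; exact_mod_cast t.mul_inv
  set F : Matrix (Fin g) (Fin g) S :=
    a • A - Bᵀ
      - ∑ u ∈ Finset.univ.filter (fun u : Fin n => (u : ℕ) < p), (s u * a) • C u
      + ∑ u ∈ Finset.univ.filter (fun u : Fin n => ¬ (u : ℕ) < p), (s u * a) • C u with hF
  set Q : Matrix (Fin g) (Fin g) S := (t : S) • A - Bᵀ + ∑ u, s u • C u with hQ
  set P : Matrix (Fin g) (Fin g) S := (t : S) • D - Dᵀ + ∑ u, s u • E u with hP
  set R : Matrix (Fin g) (Fin g) S := (t : S) • B - Aᵀ + ∑ u, s u • C' u with hR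
  have hM : (t : S) • Θ - Θᵀ + ∑ u, s u • Ψ u = Matrix.fromBlocks P Q R 0 := by
    subst hΘ
    have hsum : ∑ u, s u • Ψ u
        = Matrix.fromBlocks (∑ u, s u • E u) (∑ u, s u • C u) (∑ u, s u • C' u) 0 := by
      ext i j
      rcases i with i | i <;> rcases j with j | j <;>
        simp [hΨ, Matrix.sum_apply]
    rw [hsum]
    ext i j
    rcases i with i | i <;> rcases j with j | j <;>
      simp [hP, hQ, hR, Matrix.sum_apply]
  have hRF : R = (-(t : S)) • Fᵀ := by
    have hFt : Fᵀ = a • Aᵀ - B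
        - ∑ u ∈ Finset.univ.filter (fun u : Fin n => (u : ℕ) < p), (s u * a) • (C u)ᵀ
        + ∑ u ∈ Finset.univ.filter (fun u : Fin n => ¬ (u : ℕ) < p), (s u * a) • (C u)ᵀ := by
      rw [hF]
      simp [Matrix.transpose_add, Matrix.transpose_sub, Matrix.transpose_smul,
        Matrix.transpose_sum]
    have hsum : ∑ u, s u • C' u
        = ∑ u ∈ Finset.univ.filter (fun u : Fin n => (u : ℕ) < p), s u • (C u)ᵀ
          - ∑ u ∈ Finset.univ.filter (fun u : Fin n => ¬ (u : ℕ) < p), s u • (C u)ᵀ := by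
      have : ∀ u : Fin n, s u • C' u
          = if (u : ℕ) < p then s u • (C u)ᵀ else -(s u • (C u)ᵀ) := by
        intro u; rw [hC' u]; split <;> simp
      rw [Finset.sum_congr rfl (fun u _ => this u), Finset.sum_ite, Finset.sum_neg_distrib,
        sub_eq_add_neg]
    rw [hR, hsum, hFt]
    rw [smul_add, smul_sub, smul_sub, Finset.smul_sum, Finset.smul_sum]
    have h1 : ∀ u : Fin n, (-(t : S)) • ((s u * a) • (C u)ᵀ) = -(s u • (C u)ᵀ) := by
      intro u
      rw [smul_smul, ← neg_smul]
      congr 1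
      linear_combination (-(s u)) * hta
    have h2 : (-(t : S)) • (a • A) = -A := by
      rw [smul_smul, neg_mul, hta, neg_smul, one_smul]
    rw [Finset.sum_congr rfl (fun u _ => h1 u), Finset.sum_congr rfl (fun u _ => h1 u)]
    rw [smul_smul, neg_mul, hta, neg_smul, one_smul]
    simp only [smul_neg, neg_smul, Finset.sum_neg_distrib]
    abel
  rw [hM, det_blocks_zero_aux, hRF, Matrix.det_smul, Matrix.det_transpose,
    Fintype.card_fin]
  have hsign : ((-1 : S)) ^ g * ((-1 : S)) ^ g = 1 := by
    rw [← mul_pow]; norm_num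
  rw [show (-(t : S)) ^ g = (-1 : S) ^ g * (t : S) ^ g from by rw [neg_pow]]
  calc (-1 : S) ^ g * Q.det * ((-1 : S) ^ g * (t : S) ^ g * F.det)
      = ((-1 : S) ^ g * (-1 : S) ^ g) * ((t : S) ^ g * F.det * Q.det) := by ring
    _ = (t : S) ^ g * F.det * Q.det := by rw [hsign, one_mul]
end
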